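/- Case 5 estimate: choose δ > 0 small enough that r(δ) < ε and E|Y_{μ₂+δ}¹ − Y_{μ₂}¹| < ε. Then for any stopping strategy ρ = (ρ₀, ρ₁) ∈ 𝔗, on the event A₅ := {ρ₀ ≥ μ₁∧μ₂ + δ} ∩ {μ₁ > μ₂} one has E[U¹(ρ[τ*], τ*[ρ]) 1_{A₅}] = E[U¹(ρ₁(μ₂), μ₂) 1_{A₅}] ≤ E[Y_{μ₂}¹ 1_{A₅}] + 3ε = E[(W_{μ₁}¹ 1_{μ₁≤μ₂} + Y_{μ₂}¹ 1_{μ₁>μ₂}) 1_{A₅}] + 3ε. -/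

import Mathlib

/-!
Common setup for "On the non-zero-sum stopping game ending at the maximum of the stopping
strategies".  Time is indexed by `[0,∞] = ℝ≥0∞`.  Since `Ω` is at most countable and `ℙ`
charges every point, essential suprema/infima over families of stopping times coincide with
the pointwise ones, which is how they are formalized below.
-/

open MeasureTheory Filter Set
open scoped ENNReal Topology

noncomputable section

namespace StoppingGames

variable {Ω : Type*} [mΩ : MeasurableSpace Ω]

/-- `|a - b|` on `[0,∞]`, via truncated subtraction. -/
def dd (a b : ℝ≥0∞) : ℝ≥0∞ := (a - b) + (b - a)

/-- `𝒯`, the set of stopping times with values in `[0,∞]`. -/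
def ST (𝓕 : Filtration ℝ≥0∞ mΩ) : Set (Ω → ℝ≥0∞) := {τ | IsStoppingTime 𝓕 (fun ω => (τ ω : WithTop ℝ≥0∞))}

/-- `𝒯_σ`, the stopping times no less than `σ`. -/
def STge (𝓕 : Filtration ℝ≥0∞ mΩ) (σ : Ω → ℝ≥0∞) : Set (Ω → ℝ≥0∞) :=
  {τ | IsStoppingTime 𝓕 (fun ω => (τ ω : WithTop ℝ≥0∞)) ∧ ∀ ω, σ ω ≤ τ ω}

/-- `𝒯_{t+}`, the stopping times strictly greater than `t`. -/
def STgt (𝓕 : Filtration ℝ≥0∞ mΩ) (t : ℝ≥0∞) : Set (Ω → ℝ≥0∞) :=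
  {τ | IsStoppingTime 𝓕 (fun ω => (τ ω : WithTop ℝ≥0∞)) ∧ ∀ ω, t < τ ω}

/-- The class `𝕋` of jointly measurable maps `φ : [0,∞] × Ω → [0,∞]` with
`φ(t,·) ∈ 𝒯_{t+}` for every finite `t`. -/
def IsTT (𝓕 : Filtration ℝ≥0∞ mΩ) (φ : ℝ≥0∞ → Ω → ℝ≥0∞) : Prop :=
  Measurable (Function.uncurry φ) ∧ ∀ t : ℝ≥0∞, t ≠ ∞ → φ t ∈ STgt 𝓕 t

/-- A stopping strategy `ρ = (ρ₀, ρ₁) ∈ 𝔗`. -/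
def IsStrategy (𝓕 : Filtration ℝ≥0∞ mΩ) (ρ : (Ω → ℝ≥0∞) × (ℝ≥0∞ → Ω → ℝ≥0∞)) : Prop :=
  IsStoppingTime 𝓕 (fun ω => (ρ.1 ω : WithTop ℝ≥0∞)) ∧ IsTT 𝓕 ρ.2

/-- `𝔗_σ`, the stopping strategies whose first component is `≥ σ`. -/
def IsStrategyGe (𝓕 : Filtration ℝ≥0∞ mΩ) (σ : Ω → ℝ≥0∞)
    (ρ : (Ω → ℝ≥0∞) × (ℝ≥0∞ → Ω → ℝ≥0∞)) : Prop :=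
  IsStrategy 𝓕 ρ ∧ ∀ ω, σ ω ≤ ρ.1 ω

/-- `ρ[τ] = ρ₀ 1_{ρ₀ ≤ τ₀} + ρ₁(τ₀) 1_{ρ₀ > τ₀}`. -/
def play (ρ τ : (Ω → ℝ≥0∞) × (ℝ≥0∞ → Ω → ℝ≥0∞)) : Ω → ℝ≥0∞ := fun ω =>
  if ρ.1 ω ≤ τ.1 ω then ρ.1 ω else ρ.2 (τ.1 ω) ω

/-- `u(ρ,τ) = E[U(ρ[τ], τ[ρ])]`. -/
def payoff (μ : Measure Ω) (U : ℝ≥0∞ → ℝ≥0∞ → Ω → ℝ)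
    (ρ τ : (Ω → ℝ≥0∞) × (ℝ≥0∞ → Ω → ℝ≥0∞)) : ℝ :=
  ∫ ω, U (play ρ τ ω) (play τ ρ ω) ω ∂μ

/-- `u_σ(ρ,τ) = E[U(ρ[τ], τ[ρ]) | m]`. -/
def condPayoff (μ : Measure Ω) (m : MeasurableSpace Ω) (U : ℝ≥0∞ → ℝ≥0∞ → Ω → ℝ)
    (ρ τ : (Ω → ℝ≥0∞) × (ℝ≥0∞ → Ω → ℝ≥0∞)) : Ω → ℝ :=
  μ[fun ω => U (play ρ τ ω) (play τ ρ ω) ω | m]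

/-- The grid point `n·h ∈ [0,∞]`. -/
def grid (h : ℝ) (n : ℕ) : ℝ≥0∞ := ENNReal.ofReal (n * h)

/-- `⌊t/h⌋ + 1`. -/
def gridIdx (h : ℝ) (t : ℝ≥0∞) : ℕ := ⌊t.toReal / h⌋₊ + 1

/-- `ρ_h(t) := ρ̄((⌊t/h⌋+1)h)` for finite `t`, and `ρ_h(∞) := ∞`. -/
def gridStrat (h : ℝ) (bar : ℕ → Ω → ℝ≥0∞) : ℝ≥0∞ → Ω → ℝ≥0∞ := fun t ω =>
  if t = ∞ then ∞ else bar (gridIdx h t) ω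

/-- Evaluation `φ(σ) : ω ↦ φ(σ(ω), ω)` of a time-indexed family along a random time. -/
def evalAt (φ : ℝ≥0∞ → Ω → ℝ≥0∞) (σ : Ω → ℝ≥0∞) : Ω → ℝ≥0∞ := fun ω => φ (σ ω) ω

/-- `X_t = ess inf_{σ ∈ 𝒯_t} E[U(t,σ) | 𝓕_t]` (pointwise infimum, which coincides with the
essential one since `Ω` is countable and every point is charged). -/
def X1v (μ : Measure Ω) (𝓕 : Filtration ℝ≥0∞ mΩ) (U : ℝ≥0∞ → ℝ≥0∞ → Ω → ℝ)
    (t : ℝ≥0∞) (ω : Ω) : ℝ :=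
  ⨅ σ : STge 𝓕 (fun _ => t), (μ[fun ω' => U t (σ.1 ω') ω' | 𝓕 t]) ω

/-- `Y_t = ess sup_{σ ∈ 𝒯_t} E[U(σ,t) | 𝓕_t]`. -/
def Y1v (μ : Measure Ω) (𝓕 : Filtration ℝ≥0∞ mΩ) (U : ℝ≥0∞ → ℝ≥0∞ → Ω → ℝ)
    (t : ℝ≥0∞) (ω : Ω) : ℝ :=
  ⨆ σ : STge 𝓕 (fun _ => t), (μ[fun ω' => U (σ.1 ω') t ω' | 𝓕 t]) ω

/-- Player 2: `X²_t = ess sup_{σ ∈ 𝒯_t} E[U²(t,σ) | 𝓕_t]`. -/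
def X2v (μ : Measure Ω) (𝓕 : Filtration ℝ≥0∞ mΩ) (U : ℝ≥0∞ → ℝ≥0∞ → Ω → ℝ)
    (t : ℝ≥0∞) (ω : Ω) : ℝ :=
  ⨆ σ : STge 𝓕 (fun _ => t), (μ[fun ω' => U t (σ.1 ω') ω' | 𝓕 t]) ω

/-- Player 2: `Y²_t = ess inf_{σ ∈ 𝒯_t} E[U²(σ,t) | 𝓕_t]`. -/
def Y2v (μ : Measure Ω) (𝓕 : Filtration ℝ≥0∞ mΩ) (U : ℝ≥0∞ → ℝ≥0∞ → Ω → ℝ)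
    (t : ℝ≥0∞) (ω : Ω) : ℝ :=
  ⨅ σ : STge 𝓕 (fun _ => t), (μ[fun ω' => U (σ.1 ω') t ω' | 𝓕 t]) ω

/-- `Z_t = U(t,t)`. -/
def Zv (U : ℝ≥0∞ → ℝ≥0∞ → Ω → ℝ) : ℝ≥0∞ → Ω → ℝ := fun t ω => U t t ω

/-- `X_{ρ₀} 1_{ρ₀ < τ₀} + Y_{τ₀} 1_{ρ₀ > τ₀} + Z_{ρ₀} 1_{ρ₀ = τ₀}`. -/
def dynkinKernel (X Y Z : ℝ≥0∞ → Ω → ℝ) (ρ₀ τ₀ : Ω → ℝ≥0∞) (ω : Ω) : ℝ :=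
  if ρ₀ ω < τ₀ ω then X (ρ₀ ω) ω else if τ₀ ω < ρ₀ ω then Y (τ₀ ω) ω else Z (ρ₀ ω) ω

/-- The Dynkin-game payoff `V(ρ₀,τ₀)`. -/
def dynkinV (μ : Measure Ω) (X Y Z : ℝ≥0∞ → Ω → ℝ) (ρ₀ τ₀ : Ω → ℝ≥0∞) : ℝ :=
  ∫ ω, dynkinKernel X Y Z ρ₀ τ₀ ω ∂μ

/-- The conditional Dynkin-game payoff. -/
def condDynkin (μ : Measure Ω) (m : MeasurableSpace Ω) (X Y Z : ℝ≥0∞ → Ω → ℝ)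
    (ρ₀ τ₀ : Ω → ℝ≥0∞) : Ω → ℝ :=
  μ[fun ω => dynkinKernel X Y Z ρ₀ τ₀ ω | m]

/-- `v_t¹`, the (sup-inf) value of the conditional Dynkin game `G_t¹` with payoffs
`(X¹, Y¹, Z¹)` built from `U¹`. -/
def v1v (μ : Measure Ω) (𝓕 : Filtration ℝ≥0∞ mΩ) (U : ℝ≥0∞ → ℝ≥0∞ → Ω → ℝ)
    (t : ℝ≥0∞) (ω : Ω) : ℝ :=
  ⨆ ρ₀ : STge 𝓕 (fun _ => t), ⨅ τ₀ : STge 𝓕 (fun _ => t),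
    condDynkin μ (𝓕 t) (X1v μ 𝓕 U) (Y1v μ 𝓕 U) (Zv U) ρ₀.1 τ₀.1 ω

/-- `v_t²`, the (inf-sup) value of the conditional Dynkin game `G_t²` with payoffs
`(X², Y², Z²)` built from `U²`. -/
def v2v (μ : Measure Ω) (𝓕 : Filtration ℝ≥0∞ mΩ) (U : ℝ≥0∞ → ℝ≥0∞ → Ω → ℝ)
    (t : ℝ≥0∞) (ω : Ω) : ℝ :=
  ⨅ ρ₀ : STge 𝓕 (fun _ => t), ⨆ τ₀ : STge 𝓕 (fun _ => t),
    condDynkin μ (𝓕 t) (X2v μ 𝓕 U) (Y2v μ 𝓕 U) (Zv U) ρ₀.1 τ₀.1 ω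

/-- `W_t¹ = E[U¹(t, τ_h²(t)) | 𝓕_t]`. -/
def W1v (μ : Measure Ω) (𝓕 : Filtration ℝ≥0∞ mΩ) (U : ℝ≥0∞ → ℝ≥0∞ → Ω → ℝ)
    (h : ℝ) (bar : ℕ → Ω → ℝ≥0∞) (t : ℝ≥0∞) (ω : Ω) : ℝ :=
  (μ[fun ω' => U t (gridStrat h bar t ω') ω' | 𝓕 t]) ω

/-- `W_t² = E[U²(ρ_h¹(t), t) | 𝓕_t]`. -/
def W2v (μ : Measure Ω) (𝓕 : Filtration ℝ≥0∞ mΩ) (U : ℝ≥0∞ → ℝ≥0∞ → Ω → ℝ)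
    (h : ℝ) (bar : ℕ → Ω → ℝ≥0∞) (t : ℝ≥0∞) (ω : Ω) : ℝ :=
  (μ[fun ω' => U (gridStrat h bar t ω') t ω' | 𝓕 t]) ω

/-- `μ₁ = inf {t ≥ 0 : v_t¹ ≤ W_t¹ + ε}`. -/
def mu1T (μ : Measure Ω) (𝓕 : Filtration ℝ≥0∞ mΩ) (U : ℝ≥0∞ → ℝ≥0∞ → Ω → ℝ)
    (h ε : ℝ) (bar : ℕ → Ω → ℝ≥0∞) : Ω → ℝ≥0∞ := fun ω =>
  sInf {t | v1v μ 𝓕 U t ω ≤ W1v μ 𝓕 U h bar t ω + ε}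

/-- `μ₂ = inf {t ≥ 0 : v_t² ≤ W_t² + ε}`. -/
def mu2T (μ : Measure Ω) (𝓕 : Filtration ℝ≥0∞ mΩ) (U : ℝ≥0∞ → ℝ≥0∞ → Ω → ℝ)
    (h ε : ℝ) (bar : ℕ → Ω → ℝ≥0∞) : Ω → ℝ≥0∞ := fun ω =>
  sInf {t | v2v μ 𝓕 U t ω ≤ W2v μ 𝓕 U h bar t ω + ε}

/-- `ρ̄(nh)` is a family of `ε`-optimizers for `Y¹_{nh}`:
`E[U(ρ̄(nh), nh) | 𝓕_{nh}] ≥ Y_{nh} − ε`. -/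
def IsOptRho1 (μ : Measure Ω) (𝓕 : Filtration ℝ≥0∞ mΩ) (U : ℝ≥0∞ → ℝ≥0∞ → Ω → ℝ)
    (ε h : ℝ) (bar : ℕ → Ω → ℝ≥0∞) : Prop :=
  ∀ n : ℕ, bar n ∈ STge 𝓕 (fun _ => grid h n) ∧
    ∀ᵐ ω ∂μ, Y1v μ 𝓕 U (grid h n) ω - ε ≤
      (μ[fun ω' => U (bar n ω') (grid h n) ω' | 𝓕 (grid h n)]) ω

/-- `τ̄(nh)` is a family of `ε`-optimizers for `X¹_{nh}`:
`E[U(nh, τ̄(nh)) | 𝓕_{nh}] ≤ X_{nh} + ε`. -/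
def IsOptTau1 (μ : Measure Ω) (𝓕 : Filtration ℝ≥0∞ mΩ) (U : ℝ≥0∞ → ℝ≥0∞ → Ω → ℝ)
    (ε h : ℝ) (bar : ℕ → Ω → ℝ≥0∞) : Prop :=
  ∀ n : ℕ, bar n ∈ STge 𝓕 (fun _ => grid h n) ∧
    ∀ᵐ ω ∂μ, (μ[fun ω' => U (grid h n) (bar n ω') ω' | 𝓕 (grid h n)]) ω ≤
      X1v μ 𝓕 U (grid h n) ω + ε

/-- `ρ̄²(nh)` is a family of `ε`-optimizers for `Y²_{nh}` (an essential infimum). -/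
def IsOptRho2 (μ : Measure Ω) (𝓕 : Filtration ℝ≥0∞ mΩ) (U : ℝ≥0∞ → ℝ≥0∞ → Ω → ℝ)
    (ε h : ℝ) (bar : ℕ → Ω → ℝ≥0∞) : Prop :=
  ∀ n : ℕ, bar n ∈ STge 𝓕 (fun _ => grid h n) ∧
    ∀ᵐ ω ∂μ, (μ[fun ω' => U (bar n ω') (grid h n) ω' | 𝓕 (grid h n)]) ω ≤
      Y2v μ 𝓕 U (grid h n) ω + ε

/-- `τ̄²(nh)` is a family of `ε`-optimizers for `X²_{nh}` (an essential supremum). -/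
def IsOptTau2 (μ : Measure Ω) (𝓕 : Filtration ℝ≥0∞ mΩ) (U : ℝ≥0∞ → ℝ≥0∞ → Ω → ℝ)
    (ε h : ℝ) (bar : ℕ → Ω → ℝ≥0∞) : Prop :=
  ∀ n : ℕ, bar n ∈ STge 𝓕 (fun _ => grid h n) ∧
    ∀ᵐ ω ∂μ, X2v μ 𝓕 U (grid h n) ω - ε ≤
      (μ[fun ω' => U (grid h n) (bar n ω') ω' | 𝓕 (grid h n)]) ω

/-- The standing assumptions on the filtered probability space: `ℙ` charges every point of the
(countable) `Ω`, the filtration is right continuous (usual conditions; completeness is automatic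
since null sets are empty), and `𝓕 = 𝓕_∞ = ⋃_{t<∞} 𝓕_t`. -/
def UsualSetup (μ : Measure Ω) (𝓕 : Filtration ℝ≥0∞ mΩ) : Prop :=
  (∀ ω : Ω, μ {ω} ≠ 0) ∧
  (∀ t : ℝ≥0∞, (𝓕 t : MeasurableSpace Ω) = ⨅ s ∈ Ioi t, (𝓕 s : MeasurableSpace Ω)) ∧
  ((𝓕 ∞ : MeasurableSpace Ω) = mΩ) ∧
  ((⨆ t ∈ Iio (∞ : ℝ≥0∞), (𝓕 t : MeasurableSpace Ω)) = mΩ)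

/-- The standing assumptions on a payoff `U`: boundedness, `𝓕_{s∨t}`-measurability of `U(s,t)`,
and the uniform-continuity modulus `r` (bounded, nondecreasing, `r(0+) = r(0) = 0`).  Note that
the modulus condition, being imposed on all of `[0,∞]`, encodes that the values at `∞` are the
corresponding limits. -/
def PayoffAssumption (𝓕 : Filtration ℝ≥0∞ mΩ) (U : ℝ≥0∞ → ℝ≥0∞ → Ω → ℝ)
    (r : ℝ≥0∞ → ℝ) : Prop :=
  (∃ M : ℝ, ∀ s t ω, |U s t ω| ≤ M) ∧
  (∀ s t : ℝ≥0∞, Measurable[𝓕 (s ⊔ t)] (U s t)) ∧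
  Monotone r ∧ (∀ x, 0 ≤ r x) ∧ (∃ C : ℝ, ∀ x, r x ≤ C) ∧ r 0 = 0 ∧
  Tendsto r (𝓝[>] (0 : ℝ≥0∞)) (𝓝 (0 : ℝ)) ∧
  (∀ s t s' t' : ℝ≥0∞, ∀ ω, |U s t ω - U s' t' ω| ≤ r (dd s s' + dd t t'))

/-- The values of `U` at `∞` are the limits of the values at finite times. -/
def LimitsAtInfty (U : ℝ≥0∞ → ℝ≥0∞ → Ω → ℝ) : Prop :=
  (∀ s ω, Tendsto (fun b => U s b ω) (𝓝[<] (∞ : ℝ≥0∞)) (𝓝 (U s ∞ ω))) ∧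
  (∀ t ω, Tendsto (fun a => U a t ω) (𝓝[<] (∞ : ℝ≥0∞)) (𝓝 (U ∞ t ω))) ∧
  (∀ ω, Tendsto (fun p : ℝ≥0∞ × ℝ≥0∞ => U p.1 p.2 ω)
    ((𝓝[<] (∞ : ℝ≥0∞)) ×ˢ (𝓝[<] (∞ : ℝ≥0∞))) (𝓝 (U ∞ ∞ ω)))

/-- `ess inf_{σ ∈ 𝒯_v} E[U(s,σ) | 𝓕_v]` for a stopping time `v`. -/
def XatST (μ : Measure Ω) (𝓕 : Filtration ℝ≥0∞ mΩ) (U : ℝ≥0∞ → ℝ≥0∞ → Ω → ℝ)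
    {v : Ω → ℝ≥0∞} (hv : IsStoppingTime 𝓕 (fun ω => (v ω : WithTop ℝ≥0∞))) (s : ℝ≥0∞) (ω : Ω) : ℝ :=
  ⨅ σ : STge 𝓕 v, (μ[fun ω' => U s (σ.1 ω') ω' | hv.measurableSpace]) ω

/-- `X̃_v(s) = ess inf_{σ ∈ 𝒯_v} E[U(s,σ) | 𝓕_v]` for a deterministic time `v`. -/
def Xat (μ : Measure Ω) (𝓕 : Filtration ℝ≥0∞ mΩ) (U : ℝ≥0∞ → ℝ≥0∞ → Ω → ℝ)
    (v s : ℝ≥0∞) (ω : Ω) : ℝ :=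
  ⨅ σ : STge 𝓕 (fun _ => v), (μ[fun ω' => U s (σ.1 ω') ω' | 𝓕 v]) ω

/-- `ρ₀* = μ₁ 1_{μ₁ ≤ μ₂} + ρ²_{μ₂+δ} 1_{μ₁ > μ₂}`. -/
def rhoStar0 (m1 m2 rsad2 : Ω → ℝ≥0∞) : Ω → ℝ≥0∞ := fun ω =>
  if m1 ω ≤ m2 ω then m1 ω else rsad2 ω

/-- `ρ₁*(t) = ρ_h²(t)` if `t ≥ μ₁ ∧ μ₂ + δ` and `μ₁ > μ₂`, else `ρ_h¹(t)`. -/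
def rhoStar1 (m1 m2 : Ω → ℝ≥0∞) (δ : ℝ) (φ1 φ2 : ℝ≥0∞ → Ω → ℝ≥0∞) :
    ℝ≥0∞ → Ω → ℝ≥0∞ := fun t ω =>
  if (m1 ω ⊓ m2 ω) + ENNReal.ofReal δ ≤ t ∧ m2 ω < m1 ω then φ2 t ω else φ1 t ω

/-- `τ₀* = τ¹_{μ₁+δ} 1_{μ₁ ≤ μ₂} + μ₂ 1_{μ₁ > μ₂}`. -/
def tauStar0 (m1 m2 tsad1 : Ω → ℝ≥0∞) : Ω → ℝ≥0∞ := fun ω =>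
  if m1 ω ≤ m2 ω then tsad1 ω else m2 ω

/-- `τ₁*(t) = τ_h¹(t)` if `t ≥ μ₁ ∧ μ₂ + δ` and `μ₁ ≤ μ₂`, else `τ_h²(t)`. -/
def tauStar1 (m1 m2 : Ω → ℝ≥0∞) (δ : ℝ) (ψ1 ψ2 : ℝ≥0∞ → Ω → ℝ≥0∞) :
    ℝ≥0∞ → Ω → ℝ≥0∞ := fun t ω =>
  if (m1 ω ⊓ m2 ω) + ENNReal.ofReal δ ≤ t ∧ m1 ω ≤ m2 ω then ψ1 t ω else ψ2 t ω

end StoppingGames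

/-!
On `A₅` we have `μ₂ < μ₁` and `μ₂ + δ ≤ ρ₀`, so `τ₀* = μ₂ < ρ₀` and the game ends at
`(ρ₁(μ₂), μ₂)`; the two equalities hold pointwise on `A₅`.

For the inequality, the modulus `r` moves the payoff to `(ρ₁(μ₂) ∨ (μ₂+δ), μ₂+δ)` at a cost
`2 r(δ) < 2ε`. On each fibre `A₅ ∩ {μ₂ = t}`, which lies in `𝓕_{t+δ}` because `μ₁, μ₂` are
optional times, the time equal to `ρ₁(t) ∨ (t+δ)` on the fibre and to `∞` off it belongs to
`𝒯_{t+δ}`, so the tower property bounds the payoff on the fibre by `Y¹_{t+δ}`. Summing over the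
countably many values of `μ₂` and paying `E|Y¹_{μ₂+δ} − Y¹_{μ₂}| < ε` gives the bound.

Measurability comes from countability of `Ω`: every σ-algebra on `Ω` is generated by its atoms,
so arbitrary unions of measurable sets and pointwise suprema of measurable functions (such as
`v_t`, `Y_t`) stay measurable.
-/

section CountableSpace

variable {α β γ ι : Type*} {m : MeasurableSpace α}

theorem measurableSet_of_measurableAtom_subset [Countable α] {s : Set α}
    (h : ∀ a ∈ s, @measurableAtom α m a ⊆ s) : MeasurableSet[m] s := by
  have hs : s = ⋃ a ∈ s, @measurableAtom α m a :=
    Subset.antisymm (fun a ha => mem_biUnion ha (@mem_measurableAtom_self α m a))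
      (iUnion₂_subset h)
  rw [hs]
  exact .biUnion s.to_countable fun a _ => @MeasurableSet.measurableAtom_of_countable α m _ a

theorem measurable_of_eq_on_measurableAtom [Countable α] [MeasurableSpace β] {f : α → β}
    (h : ∀ a, ∀ b ∈ @measurableAtom α m a, f b = f a) : Measurable[m] f := fun _ _ =>
  measurableSet_of_measurableAtom_subset fun a ha b hb => by
    rw [mem_preimage, h a b hb]
    exact ha

theorem Measurable.eq_of_mem_measurableAtom [MeasurableSpace β] [MeasurableSingletonClass β]
    {f : α → β} (hf : Measurable[m] f) {a b : α} (hb : b ∈ @measurableAtom α m a) :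
    f b = f a :=
  @mem_of_mem_measurableAtom α m a b hb _ (hf (measurableSet_singleton (f a))) rfl

theorem MeasurableSet.iUnion_of_countable_space [Countable α] {s : ι → Set α}
    (hs : ∀ i, MeasurableSet[m] (s i)) : MeasurableSet[m] (⋃ i, s i) :=
  measurableSet_of_measurableAtom_subset fun a ha => by
    obtain ⟨i, hi⟩ := mem_iUnion.1 ha
    exact (@measurableAtom_subset α m _ a (hs i) hi).trans (subset_iUnion s i)

theorem MeasurableSet.iInter_of_countable_space [Countable α] {s : ι → Set α}
    (hs : ∀ i, MeasurableSet[m] (s i)) : MeasurableSet[m] (⋂ i, s i) := by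
  rw [← compl_compl (⋂ i, s i), compl_iInter]
  exact (MeasurableSet.iUnion_of_countable_space fun i => (hs i).compl).compl

theorem measurable_iSup_of_countable_space [Countable α] [SupSet β] [MeasurableSpace β]
    [MeasurableSingletonClass β] {f : ι → α → β} (hf : ∀ i, Measurable[m] (f i)) :
    Measurable[m] fun a => ⨆ i, f i a :=
  measurable_of_eq_on_measurableAtom fun _ _ hb =>
    iSup_congr fun i => Measurable.eq_of_mem_measurableAtom (hf i) hb

theorem measurable_iInf_of_countable_space [Countable α] [InfSet β] [MeasurableSpace β]
    [MeasurableSingletonClass β] {f : ι → α → β} (hf : ∀ i, Measurable[m] (f i)) :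
    Measurable[m] fun a => ⨅ i, f i a :=
  measurable_of_eq_on_measurableAtom fun _ _ hb =>
    iInf_congr fun i => Measurable.eq_of_mem_measurableAtom (hf i) hb

theorem measurable_apply_of_countable_space [Countable α] [MeasurableSpace β]
    [MeasurableSingletonClass β] [MeasurableSpace γ] [MeasurableSingletonClass γ]
    {g : β → α → γ} (hg : ∀ b, Measurable[m] (g b)) {σ : α → β} (hσ : Measurable[m] σ) :
    Measurable[m] fun a => g (σ a) a :=
  measurable_of_eq_on_measurableAtom fun _ _ hb => by
    rw [Measurable.eq_of_mem_measurableAtom hσ hb, Measurable.eq_of_mem_measurableAtom (hg _) hb]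

end CountableSpace

section ChargedSpace

variable {α : Type*} {m m₀ : MeasurableSpace α} {μ : Measure[m₀] α}

theorem forall_of_ae_of_measure_singleton_ne_zero (hμ : ∀ a, μ {a} ≠ 0) {p : α → Prop}
    (h : ∀ᵐ a ∂μ, p a) (a : α) : p a := by
  by_contra ha
  exact hμ a (measure_mono_null (singleton_subset_iff.2 ha) (ae_iff.1 h))

theorem abs_condExp_le_of_abs_le (hμ : ∀ a, μ {a} ≠ 0) {f : α → ℝ} {M : ℝ}
    (hf : ∀ a, |f a| ≤ M) (a : α) : |(μ[f|m]) a| ≤ M :=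
  forall_of_ae_of_measure_singleton_ne_zero hμ
    (ae_bdd_abs_condExp_of_ae_bdd_abs (m := m) (ae_of_all _ hf)) a

end ChargedSpace

section Integrals

variable {α β : Type*} [MeasurableSpace α] {μ : Measure α}

theorem integrable_of_abs_le [IsFiniteMeasure μ] {f : α → ℝ} (hf : Measurable f) {M : ℝ}
    (h : ∀ a, |f a| ≤ M) : Integrable f μ :=
  Integrable.of_bound hf.aestronglyMeasurable M (ae_of_all _ h)

theorem setIntegral_mono_of_fibers [MeasurableSpace β] [MeasurableSingletonClass β] {v : α → β}
    (hv : Measurable v) (hvc : (range v).Countable) {s : Set α} (hs : MeasurableSet s)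
    {f g : α → ℝ} (hf : IntegrableOn f s μ) (hg : IntegrableOn g s μ)
    (h : ∀ b, ∫ a in s ∩ v ⁻¹' {b}, f a ∂μ ≤ ∫ a in s ∩ v ⁻¹' {b}, g a ∂μ) :
    ∫ a in s, f a ∂μ ≤ ∫ a in s, g a ∂μ := by
  have := hvc.to_subtype
  let B : range v → Set α := fun b => s ∩ v ⁻¹' {b.1}
  have hB : ∀ b, MeasurableSet (B b) := fun b => hs.inter (hv (measurableSet_singleton _))
  have hdisj : Pairwise (Function.onFun Disjoint B) := fun b b' hbb' =>
    (((disjoint_singleton.2 (Subtype.coe_injective.ne hbb')).preimage v).mono_left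
      inter_subset_right).mono_right inter_subset_right
  have hcover : ⋃ b, B b = s := by
    ext a
    simp only [B, mem_iUnion, mem_inter_iff, mem_preimage, mem_singleton_iff]
    exact ⟨fun ⟨_, ha, _⟩ => ha, fun ha => ⟨⟨v a, mem_range_self a⟩, ha, rfl⟩⟩
  rw [← hcover] at hf hg ⊢
  have hfib : ∀ b, ∫ a in B b, f a ∂μ ≤ ∫ a in B b, g a ∂μ := fun b => h b.1
  exact hasSum_le hfib (hasSum_integral_iUnion hB hdisj hf) (hasSum_integral_iUnion hB hdisj hg)

theorem setIntegral_le_setIntegral_add_of_le_add [IsProbabilityMeasure μ] {s : Set α}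
    (hs : MeasurableSet s) {f g : α → ℝ} (hf : IntegrableOn f s μ) (hg : IntegrableOn g s μ)
    {c : ℝ} (hc : 0 ≤ c) (h : ∀ a ∈ s, f a ≤ g a + c) :
    ∫ a in s, f a ∂μ ≤ ∫ a in s, g a ∂μ + c :=
  calc ∫ a in s, f a ∂μ ≤ ∫ a in s, (g a + c) ∂μ :=
        setIntegral_mono_on hf (hg.add (integrable_const c).integrableOn) hs h
    _ = ∫ a in s, g a ∂μ + μ.real s * c := by
        rw [integral_add hg (integrable_const c).integrableOn, setIntegral_const, smul_eq_mul]
    _ ≤ ∫ a in s, g a ∂μ + c := by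
        gcongr
        exact mul_le_of_le_one_left hc measureReal_le_one

theorem setIntegral_le_setIntegral_add_integral_abs_sub {f g : α → ℝ} (hf : Integrable f μ)
    (hg : Integrable g μ) (s : Set α) :
    ∫ a in s, f a ∂μ ≤ ∫ a in s, g a ∂μ + ∫ a, |f a - g a| ∂μ := by
  have hsub : ∫ a in s, f a ∂μ - ∫ a in s, g a ∂μ = ∫ a in s, (f a - g a) ∂μ :=
    (integral_sub hf.integrableOn hg.integrableOn).symm
  have hle : ∫ a in s, (f a - g a) ∂μ ≤ ∫ a, |f a - g a| ∂μ :=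
    (setIntegral_mono (hf.sub hg).integrableOn (hf.sub hg).abs.integrableOn
      fun a => le_abs_self _).trans
      (setIntegral_le_integral (hf.sub hg).abs (ae_of_all _ fun a => abs_nonneg _))
  linarith

end Integrals

section OptionalTime

variable {Ω ι : Type*} {mΩ : MeasurableSpace Ω}

def IsOptionalTime [Preorder ι] (𝓕 : Filtration ι mΩ) (τ : Ω → ι) : Prop :=
  ∀ u, MeasurableSet[𝓕 u] {ω | τ ω < u}

theorem isOptionalTime_of_isStoppingTime [Countable Ω] [Preorder ι] {𝓕 : Filtration ι mΩ}
    {τ : Ω → ι} (hτ : IsStoppingTime 𝓕 fun ω => (τ ω : WithTop ι)) : IsOptionalTime 𝓕 τ := by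
  intro u
  have h : {ω | τ ω < u} = ⋃ v : Iio u, {ω | (τ ω : WithTop ι) ≤ v} := by
    ext ω
    simp only [mem_ofPred_eq, mem_iUnion, WithTop.coe_le_coe, Subtype.exists, mem_Iio]
    exact ⟨fun h => ⟨τ ω, h, le_rfl⟩, fun ⟨v, hv, hτv⟩ => hτv.trans_lt hv⟩
  rw [h]
  exact MeasurableSet.iUnion_of_countable_space fun v => 𝓕.mono v.2.le _ (hτ v)

theorem isOptionalTime_sInf [Countable Ω] [CompleteLinearOrder ι] {𝓕 : Filtration ι mΩ}
    {D : ι → Ω → Prop} (hD : ∀ s, MeasurableSet[𝓕 s] {ω | D s ω}) :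
    IsOptionalTime 𝓕 fun ω => sInf {s | D s ω} := by
  intro u
  have h : {ω | sInf {s | D s ω} < u} = ⋃ s : Iio u, {ω | D s ω} := by
    ext ω
    simp only [mem_ofPred_eq, sInf_lt_iff, mem_iUnion, Subtype.exists, mem_Iio]
    exact exists_congr fun s => by rw [exists_prop, and_comm]
  rw [h]
  exact MeasurableSet.iUnion_of_countable_space fun s => 𝓕.mono s.2.le _ (hD s)

theorem IsOptionalTime.measurableSet_le [Countable Ω] [LinearOrder ι] [DenselyOrdered ι]
    {𝓕 : Filtration ι mΩ} {τ : Ω → ι} (hτ : IsOptionalTime 𝓕 τ) {t u : ι} (htu : t < u) :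
    MeasurableSet[𝓕 u] {ω | τ ω ≤ t} := by
  have h : {ω | τ ω ≤ t} = ⋂ v : Ioo t u, {ω | τ ω < v} := by
    ext ω
    simp only [mem_ofPred_eq, mem_iInter]
    refine ⟨fun h v => h.trans_lt v.2.1, fun h => ?_⟩
    by_contra! hτt
    obtain ⟨v, htv, hv⟩ := exists_between (lt_min hτt htu)
    exact (h ⟨v, htv, hv.trans_le (min_le_right _ _)⟩).not_ge (hv.le.trans (min_le_left _ _))
  rw [h]
  exact MeasurableSet.iInter_of_countable_space fun v => 𝓕.mono v.2.2.le _ (hτ v)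

theorem IsOptionalTime.measurable [LinearOrder ι] [TopologicalSpace ι] [OrderTopology ι]
    [SecondCountableTopology ι] [MeasurableSpace ι] [BorelSpace ι] {𝓕 : Filtration ι mΩ}
    {τ : Ω → ι} (hτ : IsOptionalTime 𝓕 τ) : Measurable τ :=
  measurable_of_Iio fun u => 𝓕.le u _ (hτ u)

end OptionalTime

namespace StoppingGames

variable {Ω : Type*} [mΩ : MeasurableSpace Ω]

section Values

variable [Countable Ω] (μ : Measure Ω) (𝓕 : Filtration ℝ≥0∞ mΩ) (U : ℝ≥0∞ → ℝ≥0∞ → Ω → ℝ)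
  (h ε : ℝ) (bar : ℕ → Ω → ℝ≥0∞) (t : ℝ≥0∞)

theorem measurable_Y1v : Measurable[𝓕 t] (Y1v μ 𝓕 U t) :=
  measurable_iSup_of_countable_space fun _ => stronglyMeasurable_condExp.measurable

theorem measurable_v1v : Measurable[𝓕 t] (v1v μ 𝓕 U t) :=
  measurable_iSup_of_countable_space fun _ =>
    measurable_iInf_of_countable_space fun _ => stronglyMeasurable_condExp.measurable

theorem measurable_v2v : Measurable[𝓕 t] (v2v μ 𝓕 U t) :=
  measurable_iInf_of_countable_space fun _ =>
    measurable_iSup_of_countable_space fun _ => stronglyMeasurable_condExp.measurable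

theorem isOptionalTime_mu1T : IsOptionalTime 𝓕 (mu1T μ 𝓕 U h ε bar) :=
  isOptionalTime_sInf fun s =>
    measurableSet_le (measurable_v1v μ 𝓕 U s) (stronglyMeasurable_condExp.measurable.add_const ε)

theorem isOptionalTime_mu2T : IsOptionalTime 𝓕 (mu2T μ 𝓕 U h ε bar) :=
  isOptionalTime_sInf fun s =>
    measurableSet_le (measurable_v2v μ 𝓕 U s) (stronglyMeasurable_condExp.measurable.add_const ε)

end Values

section StoppingValue

variable {μ : Measure Ω} {𝓕 : Filtration ℝ≥0∞ mΩ} {U : ℝ≥0∞ → ℝ≥0∞ → Ω → ℝ} {M : ℝ}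

theorem const_top_mem_STge (σ : Ω → ℝ≥0∞) : (fun _ => ∞) ∈ STge 𝓕 σ :=
  ⟨isStoppingTime_const 𝓕 ∞, fun _ => le_top⟩

theorem condExp_le_Y1v (hμ : ∀ ω, μ {ω} ≠ 0) (hU : ∀ s t ω, |U s t ω| ≤ M) {t : ℝ≥0∞}
    {σ : Ω → ℝ≥0∞} (hσ : σ ∈ STge 𝓕 fun _ => t) (ω : Ω) :
    (μ[fun ω' => U (σ ω') t ω' | 𝓕 t]) ω ≤ Y1v μ 𝓕 U t ω :=
  le_ciSup (f := fun σ : STge 𝓕 (fun _ => t) => (μ[fun ω' => U (σ.1 ω') t ω' | 𝓕 t]) ω)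
    ⟨M, forall_mem_range.2 fun _ =>
      (abs_le.1 (abs_condExp_le_of_abs_le hμ (fun _ => hU _ _ _) ω)).2⟩ ⟨σ, hσ⟩

theorem abs_Y1v_le (hμ : ∀ ω, μ {ω} ≠ 0) (hU : ∀ s t ω, |U s t ω| ≤ M) (t : ℝ≥0∞) (ω : Ω) :
    |Y1v μ 𝓕 U t ω| ≤ M := by
  have hbound : ∀ σ : Ω → ℝ≥0∞, |(μ[fun ω' => U (σ ω') t ω' | 𝓕 t]) ω| ≤ M := fun _ =>
    abs_condExp_le_of_abs_le hμ (fun _ => hU _ _ _) ω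
  have : Nonempty (STge 𝓕 fun _ => t) := ⟨⟨_, const_top_mem_STge _⟩⟩
  refine abs_le.2 ⟨?_, ciSup_le fun σ => (abs_le.1 (hbound σ.1)).2⟩
  exact (abs_le.1 (hbound _)).1.trans (condExp_le_Y1v hμ hU (const_top_mem_STge _) ω)

theorem piecewise_max_mem_STge {c : ℝ≥0∞} {B : Set Ω} [DecidablePred (· ∈ B)]
    (hB : MeasurableSet[𝓕 c] B) {τ : Ω → ℝ≥0∞}
    (hτ : IsStoppingTime 𝓕 fun ω => (τ ω : WithTop ℝ≥0∞)) :
    B.piecewise (fun ω => max (τ ω) c) (fun _ => ∞) ∈ STge 𝓕 fun _ => c := by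
  refine ⟨?_, fun ω => ?_⟩
  · have hst := (hτ.max_const c).piecewise_of_le (isStoppingTime_const 𝓕 (∞ : ℝ≥0∞))
      (fun ω => le_max_right _ _) (fun _ => WithTop.coe_le_coe.2 le_top) hB
    convert hst using 2 with ω
    by_cases hω : ω ∈ B <;> simp [hω]
  · by_cases hω : ω ∈ B <;> simp [hω]

variable [Countable Ω]

theorem measurable_U_comp (hU : ∀ s t, Measurable (U s t)) {σ τ : Ω → ℝ≥0∞}
    (hσ : Measurable σ) (hτ : Measurable τ) : Measurable fun ω => U (σ ω) (τ ω) ω :=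
  measurable_apply_of_countable_space (g := fun p : ℝ≥0∞ × ℝ≥0∞ => U p.1 p.2)
    (fun p => hU p.1 p.2) (hσ.prodMk hτ)

variable [IsFiniteMeasure μ]

theorem integrable_U_comp (hUb : ∀ s t ω, |U s t ω| ≤ M) (hUm : ∀ s t, Measurable (U s t))
    {σ τ : Ω → ℝ≥0∞} (hσ : Measurable σ) (hτ : Measurable τ) :
    Integrable (fun ω => U (σ ω) (τ ω) ω) μ :=
  integrable_of_abs_le (measurable_U_comp hUm hσ hτ) fun _ => hUb _ _ _

theorem integrable_Y1v_comp (hμ : ∀ ω, μ {ω} ≠ 0) (hUb : ∀ s t ω, |U s t ω| ≤ M)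
    {τ : Ω → ℝ≥0∞} (hτ : Measurable τ) : Integrable (fun ω => Y1v μ 𝓕 U (τ ω) ω) μ :=
  integrable_of_abs_le (measurable_apply_of_countable_space
    (fun c => (measurable_Y1v μ 𝓕 U c).mono (𝓕.le c) le_rfl) hτ) fun _ => abs_Y1v_le hμ hUb _ _

theorem setIntegral_le_setIntegral_Y1v (hμ : ∀ ω, μ {ω} ≠ 0) (hUb : ∀ s t ω, |U s t ω| ≤ M)
    (hUm : ∀ s t, Measurable (U s t)) {t : ℝ≥0∞} {σ : Ω → ℝ≥0∞} (hσ : σ ∈ STge 𝓕 fun _ => t)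
    {B : Set Ω} (hB : MeasurableSet[𝓕 t] B) :
    ∫ ω in B, U (σ ω) t ω ∂μ ≤ ∫ ω in B, Y1v μ 𝓕 U t ω ∂μ := by
  rw [← setIntegral_condExp (𝓕.le t) (integrable_U_comp hUb hUm
    (isOptionalTime_of_isStoppingTime hσ.1).measurable measurable_const) hB]
  exact setIntegral_mono_on integrable_condExp.integrableOn
    (integrable_Y1v_comp hμ hUb measurable_const).integrableOn (𝓕.le t _ hB)
    fun ω _ => condExp_le_Y1v hμ hUb hσ ω

theorem setIntegral_U_max_le_setIntegral_Y1v (hμ : ∀ ω, μ {ω} ≠ 0)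
    (hUb : ∀ s t ω, |U s t ω| ≤ M) (hUm : ∀ s t, Measurable (U s t)) {c : ℝ≥0∞} {B : Set Ω}
    (hB : MeasurableSet[𝓕 c] B) {τ : Ω → ℝ≥0∞}
    (hτ : IsStoppingTime 𝓕 fun ω => (τ ω : WithTop ℝ≥0∞)) :
    ∫ ω in B, U (max (τ ω) c) c ω ∂μ ≤ ∫ ω in B, Y1v μ 𝓕 U c ω ∂μ := by
  classical
  calc ∫ ω in B, U (max (τ ω) c) c ω ∂μ
      = ∫ ω in B, U (B.piecewise (fun ω => max (τ ω) c) (fun _ => ∞) ω) c ω ∂μ :=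
        setIntegral_congr_fun (𝓕.le c _ hB) fun ω hω => by rw [piecewise_eq_of_mem _ _ _ hω]
    _ ≤ ∫ ω in B, Y1v μ 𝓕 U c ω ∂μ :=
        setIntegral_le_setIntegral_Y1v hμ hUb hUm (piecewise_max_mem_STge hB hτ) hB

end StoppingValue

section Modulus

theorem dd_self_add {t : ℝ≥0∞} (ht : t ≠ ∞) (δ : ℝ≥0∞) : dd t (t + δ) = δ := by
  rw [dd, tsub_eq_zero_of_le le_self_add, ENNReal.add_sub_cancel_left ht, zero_add]

theorem dd_max_self_add_le {s t : ℝ≥0∞} (ht : t ≠ ∞) (hts : t ≤ s) (δ : ℝ≥0∞) :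
    dd s (max s (t + δ)) ≤ δ := by
  rcases le_total (t + δ) s with h | h
  · simp [dd, max_eq_left h]
  · rw [dd, max_eq_right h, tsub_eq_zero_of_le h, zero_add]
    calc t + δ - s ≤ t + δ - t := tsub_le_tsub_left hts _
      _ = δ := ENNReal.add_sub_cancel_left ht

theorem le_max_add_of_modulus {α : Type*} {U : ℝ≥0∞ → ℝ≥0∞ → α → ℝ} {r : ℝ≥0∞ → ℝ}
    (hr : Monotone r) (hmod : ∀ s t s' t' a, |U s t a - U s' t' a| ≤ r (dd s s' + dd t t'))
    {s t : ℝ≥0∞} (ht : t ≠ ∞) (hts : t ≤ s) (δ : ℝ≥0∞) (ω : α) :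
    U s t ω ≤ U (max s (t + δ)) (t + δ) ω + 2 * r δ := by
  have hdd : ∀ x, dd x x = 0 := fun x => by simp [dd]
  have h₁ : |U s t ω - U s (t + δ) ω| ≤ r δ := by
    simpa only [hdd, dd_self_add ht, zero_add] using hmod s t s (t + δ) ω
  have h₂ : |U s (t + δ) ω - U (max s (t + δ)) (t + δ) ω| ≤ r δ :=
    (hmod _ _ _ _ ω).trans (hr (by simpa only [hdd, add_zero] using dd_max_self_add_le ht hts δ))
  linarith [le_abs_self (U s t ω - U s (t + δ) ω),
    le_abs_self (U s (t + δ) ω - U (max s (t + δ)) (t + δ) ω)]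

end Modulus

section CaseFive

/-- The event `A₅` of the paper. -/
def caseFiveEvent (m1 m2 ρ₀ : Ω → ℝ≥0∞) (δ : ℝ≥0∞) : Set Ω :=
  {ω | m1 ω ⊓ m2 ω + δ ≤ ρ₀ ω ∧ m2 ω < m1 ω}

theorem mem_caseFiveEvent {α : Type*} {m1 m2 ρ₀ : α → ℝ≥0∞} {δ : ℝ≥0∞} {a : α} :
    a ∈ caseFiveEvent m1 m2 ρ₀ δ ↔ m2 a + δ ≤ ρ₀ a ∧ m2 a < m1 a := by
  refine and_congr_left fun h => ?_
  rw [inf_eq_right.2 h.le]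

theorem play_eq_of_mem_caseFiveEvent {α : Type*} {m1 m2 τsad : α → ℝ≥0∞}
    {ρ : (α → ℝ≥0∞) × (ℝ≥0∞ → α → ℝ≥0∞)} {τ₁ : ℝ≥0∞ → α → ℝ≥0∞} {δ : ℝ≥0∞} {ω : α}
    (hδ : 0 < δ) (hω : ω ∈ caseFiveEvent m1 m2 ρ.1 δ) :
    play ρ (tauStar0 m1 m2 τsad, τ₁) ω = ρ.2 (m2 ω) ω ∧
      play (tauStar0 m1 m2 τsad, τ₁) ρ ω = m2 ω := by
  obtain ⟨hρ, hlt⟩ := mem_caseFiveEvent.1 hω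
  have hm2ρ : m2 ω < ρ.1 ω := (ENNReal.lt_add_right hlt.ne_top hδ.ne').trans_le hρ
  simp [play, tauStar0, hlt.not_ge, hm2ρ.not_ge, hm2ρ.le]

variable {m1 m2 ρ₀ : Ω → ℝ≥0∞} {δ : ℝ≥0∞}

theorem measurableSet_caseFiveEvent (hm1 : Measurable m1) (hm2 : Measurable m2)
    (hρ₀ : Measurable ρ₀) : MeasurableSet (caseFiveEvent m1 m2 ρ₀ δ) :=
  (measurableSet_le ((hm1.min hm2).add_const δ) hρ₀).inter (measurableSet_lt hm2 hm1)

theorem measurableSet_caseFiveEvent_inter_fiber [Countable Ω] {𝓕 : Filtration ℝ≥0∞ mΩ}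
    (hm1 : IsOptionalTime 𝓕 m1) (hm2 : IsOptionalTime 𝓕 m2) (hρ₀ : IsOptionalTime 𝓕 ρ₀)
    {t : ℝ≥0∞} (ht : t < t + δ) :
    MeasurableSet[𝓕 (t + δ)] (caseFiveEvent m1 m2 ρ₀ δ ∩ m2 ⁻¹' {t}) := by
  have h : caseFiveEvent m1 m2 ρ₀ δ ∩ m2 ⁻¹' {t} =
      ({ω | m2 ω ≤ t} \ {ω | m2 ω < t}) \ ({ω | m1 ω ≤ t} ∪ {ω | ρ₀ ω < t + δ}) := by
    ext ω
    simp only [mem_inter_iff, mem_caseFiveEvent, mem_preimage, mem_singleton_iff,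
      Set.mem_sdiff, mem_union, mem_ofPred_eq, not_or, not_le, not_lt]
    constructor
    · rintro ⟨⟨hρ, hlt⟩, rfl⟩
      exact ⟨⟨le_rfl, le_rfl⟩, hlt, hρ⟩
    · rintro ⟨⟨hle, hge⟩, hlt, hρ⟩
      obtain rfl := le_antisymm hle hge
      exact ⟨⟨hρ, hlt⟩, rfl⟩
  rw [h]
  exact ((hm2.measurableSet_le ht).diff (𝓕.mono ht.le _ (hm2 t))).diff
    ((hm1.measurableSet_le ht).union (hρ₀ (t + δ)))

variable [Countable Ω] {μ : Measure Ω} {𝓕 : Filtration ℝ≥0∞ mΩ} {U : ℝ≥0∞ → ℝ≥0∞ → Ω → ℝ}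
  {M : ℝ} {ρ : (Ω → ℝ≥0∞) × (ℝ≥0∞ → Ω → ℝ≥0∞)}

theorem setIntegral_caseFiveEvent_U_max_le [IsFiniteMeasure μ] (hμ : ∀ ω, μ {ω} ≠ 0)
    (hUb : ∀ s t ω, |U s t ω| ≤ M) (hUm : ∀ s t, Measurable (U s t)) (hρ : IsStrategy 𝓕 ρ)
    (hm1 : IsOptionalTime 𝓕 m1) (hm2 : IsOptionalTime 𝓕 m2) (hδ : 0 < δ) :
    ∫ ω in caseFiveEvent m1 m2 ρ.1 δ, U (max (ρ.2 (m2 ω) ω) (m2 ω + δ)) (m2 ω + δ) ω ∂μ ≤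
      ∫ ω in caseFiveEvent m1 m2 ρ.1 δ, Y1v μ 𝓕 U (m2 ω + δ) ω ∂μ := by
  have hρ₀ := isOptionalTime_of_isStoppingTime hρ.1
  have hm2δ : Measurable fun ω => m2 ω + δ := hm2.measurable.add_const δ
  refine setIntegral_mono_of_fibers hm2.measurable (countable_range m2)
    (measurableSet_caseFiveEvent hm1.measurable hm2.measurable hρ₀.measurable)
    (integrable_U_comp hUb hUm
      ((hρ.2.1.comp (hm2.measurable.prodMk measurable_id)).max hm2δ) hm2δ).integrableOn
    (integrable_Y1v_comp hμ hUb hm2δ).integrableOn fun t => ?_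
  rcases eq_or_ne t ∞ with rfl | ht
  · have hempty : caseFiveEvent m1 m2 ρ.1 δ ∩ m2 ⁻¹' {∞} = ∅ :=
      eq_empty_of_forall_notMem fun ω ⟨hω, hω₂⟩ => (mem_caseFiveEvent.1 hω).2.ne_top hω₂
    simp [hempty]
  have hB := measurableSet_caseFiveEvent_inter_fiber hm1 hm2 hρ₀ (ENNReal.lt_add_right ht hδ.ne')
  calc ∫ ω in caseFiveEvent m1 m2 ρ.1 δ ∩ m2 ⁻¹' {t},
        U (max (ρ.2 (m2 ω) ω) (m2 ω + δ)) (m2 ω + δ) ω ∂μ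
      = ∫ ω in caseFiveEvent m1 m2 ρ.1 δ ∩ m2 ⁻¹' {t}, U (max (ρ.2 t ω) (t + δ)) (t + δ) ω ∂μ :=
        setIntegral_congr_fun (𝓕.le _ _ hB) fun ω hω => by rw [hω.2]
    _ ≤ ∫ ω in caseFiveEvent m1 m2 ρ.1 δ ∩ m2 ⁻¹' {t}, Y1v μ 𝓕 U (t + δ) ω ∂μ :=
        setIntegral_U_max_le_setIntegral_Y1v hμ hUb hUm hB (hρ.2.2 t ht).1
    _ = ∫ ω in caseFiveEvent m1 m2 ρ.1 δ ∩ m2 ⁻¹' {t}, Y1v μ 𝓕 U (m2 ω + δ) ω ∂μ :=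
        setIntegral_congr_fun (𝓕.le _ _ hB) fun ω hω => by rw [hω.2]

theorem setIntegral_caseFiveEvent_le_add [IsProbabilityMeasure μ] {r : ℝ≥0∞ → ℝ}
    (hμ : ∀ ω, μ {ω} ≠ 0) (hUb : ∀ s t ω, |U s t ω| ≤ M) (hUm : ∀ s t, Measurable (U s t))
    (hr : Monotone r) (hmod : ∀ s t s' t' ω, |U s t ω - U s' t' ω| ≤ r (dd s s' + dd t t'))
    (hρ : IsStrategy 𝓕 ρ) (hm1 : IsOptionalTime 𝓕 m1) (hm2 : IsOptionalTime 𝓕 m2) (hδ : 0 < δ)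
    {ε : ℝ} (hrδ : r δ < ε) (hYδ : ∫ ω, |Y1v μ 𝓕 U (m2 ω + δ) ω - Y1v μ 𝓕 U (m2 ω) ω| ∂μ < ε) :
    ∫ ω in caseFiveEvent m1 m2 ρ.1 δ, U (ρ.2 (m2 ω) ω) (m2 ω) ω ∂μ ≤
      ∫ ω in caseFiveEvent m1 m2 ρ.1 δ, Y1v μ 𝓕 U (m2 ω) ω ∂μ + 3 * ε := by
  have hε : 0 ≤ ε := (integral_nonneg fun ω => abs_nonneg _).trans hYδ.le
  have hA := measurableSet_caseFiveEvent (δ := δ) hm1.measurable hm2.measurable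
    (isOptionalTime_of_isStoppingTime hρ.1).measurable
  have hm2δ : Measurable fun ω => m2 ω + δ := hm2.measurable.add_const δ
  have hρ₁ : Measurable fun ω => ρ.2 (m2 ω) ω := hρ.2.1.comp (hm2.measurable.prodMk measurable_id)
  calc ∫ ω in caseFiveEvent m1 m2 ρ.1 δ, U (ρ.2 (m2 ω) ω) (m2 ω) ω ∂μ
      ≤ ∫ ω in caseFiveEvent m1 m2 ρ.1 δ, U (max (ρ.2 (m2 ω) ω) (m2 ω + δ)) (m2 ω + δ) ω ∂μ
          + 2 * ε := by
        refine setIntegral_le_setIntegral_add_of_le_add hA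
          (integrable_U_comp hUb hUm hρ₁ hm2.measurable).integrableOn
          (integrable_U_comp hUb hUm (hρ₁.max hm2δ) hm2δ).integrableOn (by linarith)
          fun ω hω => ?_
        have hm2ω := (mem_caseFiveEvent.1 hω).2.ne_top
        linarith [le_max_add_of_modulus hr hmod hm2ω ((hρ.2.2 _ hm2ω).2 ω).le δ ω]
    _ ≤ ∫ ω in caseFiveEvent m1 m2 ρ.1 δ, Y1v μ 𝓕 U (m2 ω + δ) ω ∂μ + 2 * ε := by
        linarith [setIntegral_caseFiveEvent_U_max_le hμ hUb hUm hρ hm1 hm2 hδ]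
    _ ≤ ∫ ω in caseFiveEvent m1 m2 ρ.1 δ, Y1v μ 𝓕 U (m2 ω) ω ∂μ + 3 * ε := by
        linarith [setIntegral_le_setIntegral_add_integral_abs_sub
          (integrable_Y1v_comp (𝓕 := 𝓕) hμ hUb hm2δ)
          (integrable_Y1v_comp (𝓕 := 𝓕) hμ hUb hm2.measurable) (caseFiveEvent m1 m2 ρ.1 δ)]

end CaseFive

theorem case_five_estimate_general [Countable Ω] (μ : Measure Ω) [IsProbabilityMeasure μ]
    (𝓕 : Filtration ℝ≥0∞ mΩ) (hsetup : UsualSetup μ 𝓕)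
    (U1 U2 : ℝ≥0∞ → ℝ≥0∞ → Ω → ℝ) (r : ℝ≥0∞ → ℝ)
    (hU1 : PayoffAssumption 𝓕 U1 r)
    (ε h δ : ℝ) (hδ : 0 < δ)
    (ρbar1 τbar1 τbar2 : ℕ → Ω → ℝ≥0∞)
    (m1 m2 : Ω → ℝ≥0∞)
    (hm1 : m1 = mu1T μ 𝓕 U1 h ε τbar2) (hm2 : m2 = mu2T μ 𝓕 U2 h ε ρbar1)
    (τsad1 : Ω → ℝ≥0∞)
    (hrδ : r (ENNReal.ofReal δ) < ε)
    (hYδ : (∫ ω, |Y1v μ 𝓕 U1 (m2 ω + ENNReal.ofReal δ) ω - Y1v μ 𝓕 U1 (m2 ω) ω| ∂μ) < ε) :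
    ∀ ρ : (Ω → ℝ≥0∞) × (ℝ≥0∞ → Ω → ℝ≥0∞), IsStrategy 𝓕 ρ →
      (∫ ω, Set.indicator {ω' | (m1 ω' ⊓ m2 ω') + ENNReal.ofReal δ ≤ ρ.1 ω' ∧ m2 ω' < m1 ω'}
          (fun ω' => U1
            (play ρ (tauStar0 m1 m2 τsad1,
              tauStar1 m1 m2 δ (gridStrat h τbar1) (gridStrat h τbar2)) ω')
            (play (tauStar0 m1 m2 τsad1,
              tauStar1 m1 m2 δ (gridStrat h τbar1) (gridStrat h τbar2)) ρ ω') ω') ω ∂μ)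
        = (∫ ω, Set.indicator
            {ω' | (m1 ω' ⊓ m2 ω') + ENNReal.ofReal δ ≤ ρ.1 ω' ∧ m2 ω' < m1 ω'}
            (fun ω' => U1 (ρ.2 (m2 ω') ω') (m2 ω') ω') ω ∂μ) ∧
      (∫ ω, Set.indicator {ω' | (m1 ω' ⊓ m2 ω') + ENNReal.ofReal δ ≤ ρ.1 ω' ∧ m2 ω' < m1 ω'}
          (fun ω' => U1 (ρ.2 (m2 ω') ω') (m2 ω') ω') ω ∂μ)
        ≤ (∫ ω, Set.indicator
            {ω' | (m1 ω' ⊓ m2 ω') + ENNReal.ofReal δ ≤ ρ.1 ω' ∧ m2 ω' < m1 ω'}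
            (fun ω' => Y1v μ 𝓕 U1 (m2 ω') ω') ω ∂μ) + 3*ε ∧
      (∫ ω, Set.indicator {ω' | (m1 ω' ⊓ m2 ω') + ENNReal.ofReal δ ≤ ρ.1 ω' ∧ m2 ω' < m1 ω'}
          (fun ω' => Y1v μ 𝓕 U1 (m2 ω') ω') ω ∂μ)
        = (∫ ω, Set.indicator
            {ω' | (m1 ω' ⊓ m2 ω') + ENNReal.ofReal δ ≤ ρ.1 ω' ∧ m2 ω' < m1 ω'}
            (fun ω' => if m1 ω' ≤ m2 ω' then W1v μ 𝓕 U1 h τbar2 (m1 ω') ω'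
                       else Y1v μ 𝓕 U1 (m2 ω') ω') ω ∂μ) := by
  intro ρ hρ
  obtain ⟨hμ, -⟩ := hsetup
  obtain ⟨⟨M, hUb⟩, hUm, hr, -, -, -, -, hmod⟩ := hU1
  have hδ' : 0 < ENNReal.ofReal δ := ENNReal.ofReal_pos.2 hδ
  have hm1' : IsOptionalTime 𝓕 m1 := hm1 ▸ isOptionalTime_mu1T μ 𝓕 U1 h ε τbar2
  have hm2' : IsOptionalTime 𝓕 m2 := hm2 ▸ isOptionalTime_mu2T μ 𝓕 U2 h ε ρbar1
  have hA : MeasurableSet (caseFiveEvent m1 m2 ρ.1 (ENNReal.ofReal δ)) :=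
    measurableSet_caseFiveEvent hm1'.measurable hm2'.measurable
      (isOptionalTime_of_isStoppingTime hρ.1).measurable
  refine ⟨congrArg (integral μ) (indicator_congr fun ω hω => ?_), ?_,
    congrArg (integral μ) (indicator_congr fun ω hω => ?_)⟩
  · rw [(play_eq_of_mem_caseFiveEvent hδ' hω).1, (play_eq_of_mem_caseFiveEvent hδ' hω).2]
  · change ∫ ω, (caseFiveEvent m1 m2 ρ.1 _).indicator _ ω ∂μ ≤
      ∫ ω, (caseFiveEvent m1 m2 ρ.1 _).indicator _ ω ∂μ + 3 * ε
    rw [integral_indicator hA, integral_indicator hA]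
    exact setIntegral_caseFiveEvent_le_add hμ hUb (fun s t => (hUm s t).mono (𝓕.le _) le_rfl)
      hr hmod hρ hm1' hm2' hδ' hrδ hYδ
  · rw [if_neg (mem_caseFiveEvent.1 hω).2.not_ge]

/-- Case 5 in the proof of Proposition 4.2: choose `δ > 0` with `r(δ) < ε`
and `E|Y¹_{μ₂+δ} − Y¹_{μ₂}| < ε`.  Then for any stopping strategy `ρ`, on
`A₅ = {ρ₀ ≥ μ₁∧μ₂+δ} ∩ {μ₁ > μ₂}`:
`E[U¹(ρ[τ*], τ*[ρ]) 1_{A₅}] = E[U¹(ρ₁(μ₂), μ₂) 1_{A₅}] ≤ E[Y¹_{μ₂} 1_{A₅}] + 3ε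
= E[(W¹_{μ₁} 1_{μ₁≤μ₂} + Y¹_{μ₂} 1_{μ₁>μ₂}) 1_{A₅}] + 3ε`. -/
theorem case_five_estimate [Countable Ω] (μ : Measure Ω) [IsProbabilityMeasure μ]
    (𝓕 : Filtration ℝ≥0∞ mΩ) (hsetup : UsualSetup μ 𝓕)
    (U1 U2 : ℝ≥0∞ → ℝ≥0∞ → Ω → ℝ) (r : ℝ≥0∞ → ℝ)
    (hU1 : PayoffAssumption 𝓕 U1 r) (hU2 : PayoffAssumption 𝓕 U2 r)
    (ε h δ : ℝ) (hε : 0 < ε) (hh : 0 < h) (hδ : 0 < δ)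
    (ρbar1 τbar1 ρbar2 τbar2 : ℕ → Ω → ℝ≥0∞)
    (hρ1 : IsOptRho1 μ 𝓕 U1 ε h ρbar1) (hτ1 : IsOptTau1 μ 𝓕 U1 ε h τbar1)
    (hρ2 : IsOptRho2 μ 𝓕 U2 ε h ρbar2) (hτ2 : IsOptTau2 μ 𝓕 U2 ε h τbar2)
    (m1 m2 : Ω → ℝ≥0∞)
    (hm1 : m1 = mu1T μ 𝓕 U1 h ε τbar2) (hm2 : m2 = mu2T μ 𝓕 U2 h ε ρbar1)
    (τsad1 : Ω → ℝ≥0∞)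
    (hτsad1 : τsad1 ∈ STge 𝓕 (fun ω => m1 ω + ENNReal.ofReal δ))
    (hrδ : r (ENNReal.ofReal δ) < ε)
    (hYδ : (∫ ω, |Y1v μ 𝓕 U1 (m2 ω + ENNReal.ofReal δ) ω - Y1v μ 𝓕 U1 (m2 ω) ω| ∂μ) < ε) :
    ∀ ρ : (Ω → ℝ≥0∞) × (ℝ≥0∞ → Ω → ℝ≥0∞), IsStrategy 𝓕 ρ →
      (∫ ω, Set.indicator {ω' | (m1 ω' ⊓ m2 ω') + ENNReal.ofReal δ ≤ ρ.1 ω' ∧ m2 ω' < m1 ω'}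
          (fun ω' => U1
            (play ρ (tauStar0 m1 m2 τsad1,
              tauStar1 m1 m2 δ (gridStrat h τbar1) (gridStrat h τbar2)) ω')
            (play (tauStar0 m1 m2 τsad1,
              tauStar1 m1 m2 δ (gridStrat h τbar1) (gridStrat h τbar2)) ρ ω') ω') ω ∂μ)
        = (∫ ω, Set.indicator
            {ω' | (m1 ω' ⊓ m2 ω') + ENNReal.ofReal δ ≤ ρ.1 ω' ∧ m2 ω' < m1 ω'}
            (fun ω' => U1 (ρ.2 (m2 ω') ω') (m2 ω') ω') ω ∂μ) ∧
      (∫ ω, Set.indicator {ω' | (m1 ω' ⊓ m2 ω') + ENNReal.ofReal δ ≤ ρ.1 ω' ∧ m2 ω' < m1 ω'}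
          (fun ω' => U1 (ρ.2 (m2 ω') ω') (m2 ω') ω') ω ∂μ)
        ≤ (∫ ω, Set.indicator
            {ω' | (m1 ω' ⊓ m2 ω') + ENNReal.ofReal δ ≤ ρ.1 ω' ∧ m2 ω' < m1 ω'}
            (fun ω' => Y1v μ 𝓕 U1 (m2 ω') ω') ω ∂μ) + 3*ε ∧
      (∫ ω, Set.indicator {ω' | (m1 ω' ⊓ m2 ω') + ENNReal.ofReal δ ≤ ρ.1 ω' ∧ m2 ω' < m1 ω'}
          (fun ω' => Y1v μ 𝓕 U1 (m2 ω') ω') ω ∂μ)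
        = (∫ ω, Set.indicator
            {ω' | (m1 ω' ⊓ m2 ω') + ENNReal.ofReal δ ≤ ρ.1 ω' ∧ m2 ω' < m1 ω'}
            (fun ω' => if m1 ω' ≤ m2 ω' then W1v μ 𝓕 U1 h τbar2 (m1 ω') ω'
                       else Y1v μ 𝓕 U1 (m2 ω') ω') ω ∂μ) :=
  case_five_estimate_general μ 𝓕 hsetup U1 U2 r hU1 ε h δ hδ ρbar1 τbar1 τbar2 m1 m2 hm1 hm2 τsad1
    hrδ hYδ

end StoppingGames
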